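/- Let G be an essential labelled graph. Every attractor Ω of the dynamical system (Σ(G), σ) equals Σ(π⁻¹(H)) for some nonempty terminal subgraph H of the linking graph G/≈. -/

import Mathlib

/-! Common definitions: labelled graphs, walks, follower sets, the linking
relation, subshifts over `ℤ → A`, chains, and attractors. -/

structure LGraph (A : Type) where
  V : Type
  E : Type
  [finV : Finite V]
  [finE : Finite E]
  s : E → V
  t : E → V
  lab : E → A

attribute [instance] LGraph.finV LGraph.finE

namespace LGraph

variable {A : Type}

/-- `Walk G u v es` : the list of edges `es` forms a walk from `u` to `v`. -/
inductive Walk (G : LGraph A) : G.V → G.V → List G.E → Prop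
  | nil (v : G.V) : Walk G v v []
  | cons {w : G.V} {es : List G.E} (e : G.E) (h : Walk G (G.t e) w es) :
      Walk G (G.s e) w (e :: es)

/-- There is an edge from `u` to `v`. -/
def EdgeRel (G : LGraph A) (u v : G.V) : Prop := ∃ e : G.E, G.s e = u ∧ G.t e = v

/-- `v` is reachable from `u` by a directed walk. -/
def Reach (G : LGraph A) : G.V → G.V → Prop := Relation.ReflTransGen G.EdgeRel

/-- `u` and `v` lie in the same strongly connected component. -/
def SameComp (G : LGraph A) (u v : G.V) : Prop := G.Reach u v ∧ G.Reach v u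

/-- The number of strongly connected components of `G`. -/
noncomputable def numComponents (G : LGraph A) : ℕ :=
  Nat.card {K : Set G.V // ∃ v : G.V, K = {u : G.V | G.SameComp v u}}

/-- The restricted follower set of `v` : words labelling walks starting at `v`
that stay inside the strongly connected component of `v`. -/
def FollowR (G : LGraph A) (v : G.V) : Set (List A) :=
  {w | ∃ (u : G.V) (es : List G.E), G.Walk v u es ∧ es.map G.lab = w ∧
        ∀ e ∈ es, G.SameComp v (G.s e) ∧ G.SameComp v (G.t e)}

/-- Two vertices are linked iff their restricted follower sets have infinite
intersection. -/
def Linked (G : LGraph A) (u v : G.V) : Prop := (G.FollowR u ∩ G.FollowR v).Infinite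

/-- `≈` : the reflexive-transitive closure of the linked relation. -/
def Approx (G : LGraph A) : G.V → G.V → Prop := Relation.ReflTransGen G.Linked

/-- One step in the linking graph `G/≈` (lifted to `G`): either an edge of `G`
or a jump between linked vertices. -/
def GenStep (G : LGraph A) (u v : G.V) : Prop := G.EdgeRel u v ∨ G.Linked u v

/-- Reachability in the linking graph `G/≈`, expressed on vertices of `G`. -/
def GenReach (G : LGraph A) : G.V → G.V → Prop := Relation.ReflTransGen G.GenStep

/-- The language of `G` : words labelling finite walks in `G`. -/
def Lang (G : LGraph A) : Set (List A) :=
  {w | ∃ (u v : G.V) (es : List G.E), G.Walk u v es ∧ es.map G.lab = w}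

/-- `w` has a presentation in the subgraph of `G` induced by the vertex set `S`. -/
def PresIn (G : LGraph A) (S : Set G.V) (w : List A) : Prop :=
  ∃ (u v : G.V) (es : List G.E), G.Walk u v es ∧ es.map G.lab = w ∧
    u ∈ S ∧ v ∈ S ∧ ∀ e ∈ es, G.s e ∈ S ∧ G.t e ∈ S

/-- A presentation of the first `n` letters of `w`, with explicit vertex
sequence `v` and edge sequence `e`. -/
def PresFun (G : LGraph A) (n : ℕ) (w : ℕ → A) (v : ℕ → G.V) (e : ℕ → G.E) : Prop :=
  ∀ i < n, G.s (e i) = v i ∧ G.t (e i) = v (i + 1) ∧ G.lab (e i) = w i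

/-- `S` is a union of `≈`-equivalence classes, i.e. `S = π⁻¹(π(S))` for the
projection `π : G → G/≈`. -/
def SaturatedSet (G : LGraph A) (S : Set G.V) : Prop :=
  ∀ u v : G.V, G.Approx u v → (u ∈ S ↔ v ∈ S)

/-- No edge leaves `S` : together with saturation this says that the image of
`S` in `G/≈` is a terminal subgraph. -/
def ForwardClosed (G : LGraph A) (S : Set G.V) : Prop :=
  ∀ e : G.E, G.s e ∈ S → G.t e ∈ S

/-- Every vertex has an ingoing and an outgoing edge. -/
def Essential (G : LGraph A) : Prop :=
  ∀ v : G.V, (∃ e : G.E, G.t e = v) ∧ (∃ e : G.E, G.s e = v)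

/-- A biinfinite presentation of `x` (vertex sequence `v`, edge sequence `e`)
staying in the vertex set `S`. -/
def BiPresIn (G : LGraph A) (S : Set G.V) (x : ℤ → A) (v : ℤ → G.V) (e : ℤ → G.E) : Prop :=
  ∀ i : ℤ, G.s (e i) = v i ∧ G.t (e i) = v (i + 1) ∧ G.lab (e i) = x i ∧ v i ∈ S

/-- The subshift of biinfinite label sequences of biinfinite walks of `G`
staying in `S`. -/
def SigmaIn (G : LGraph A) (S : Set G.V) : Set (ℤ → A) :=
  {x | ∃ v e, G.BiPresIn S x v e}

/-- The sofic subshift `Σ(G)`. -/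
def Sigma' (G : LGraph A) : Set (ℤ → A) := G.SigmaIn Set.univ

/-- The linking graph `G/≈` is strongly connected. -/
def StronglyConnectedQuot (G : LGraph A) : Prop := ∀ u v : G.V, G.GenReach u v

/-- The linking graph `G/≈` is periodic : its vertices can be partitioned into
`n > 1` classes (indexed by `ZMod n`, each a union of `≈`-classes) so that every
edge advances the class index by one. -/
def PeriodicQuot (G : LGraph A) : Prop :=
  ∃ n : ℕ, 1 < n ∧ ∃ c : G.V → ZMod n,
    (∀ u v : G.V, G.Approx u v → c u = c v) ∧ ∀ e : G.E, c (G.t e) = c (G.s e) + 1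

/-- The label product `G * H`. -/
def labelProduct (G H : LGraph A) : LGraph A where
  V := G.V × H.V
  E := {p : G.E × H.E // G.lab p.1 = H.lab p.2}
  s := fun p => (G.s p.1.1, H.s p.1.2)
  t := fun p => (G.t p.1.1, H.t p.1.2)
  lab := fun p => G.lab p.1.1

end LGraph

section Subshift

variable {A : Type}

/-- The shift map `σ`. -/
def shift (x : ℤ → A) : ℤ → A := fun i => x (i + 1)

open Classical in
/-- The metric `ρ(x,y) = 2^{-n}` where `n` is minimal with `x_n ≠ y_n` or
`x_{-n} ≠ y_{-n}` (and `ρ(x,x) = 0`). -/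
noncomputable def rho (x y : ℤ → A) : ℝ :=
  if x = y then 0
  else (2 : ℝ) ^ (-((sInf {n : ℕ | ∃ i : ℤ, i.natAbs = n ∧ x i ≠ y i} : ℕ) : ℤ))

/-- Closedness with respect to the metric `rho`. -/
def RhoClosed (Sig : Set (ℤ → A)) : Prop :=
  ∀ x : ℤ → A, (∀ ε : ℝ, 0 < ε → ∃ y ∈ Sig, rho x y < ε) → x ∈ Sig

/-- A subshift : a closed, strongly shift-invariant subset of `A^ℤ`. -/
def IsSubshift (Sig : Set (ℤ → A)) : Prop :=
  RhoClosed Sig ∧ shift '' Sig = Sig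

/-- The language of the subshift `Sig` : all finite factors of its points. -/
def lang (Sig : Set (ℤ → A)) : Set (List A) :=
  {w | ∃ x ∈ Sig, ∃ k : ℤ, ∀ (i : ℕ) (h : i < w.length), w.get ⟨i, h⟩ = x (k + i)}

/-- The central factor `x_{[-l,l]}` of a biinfinite word. -/
def central (x : ℤ → A) (l : ℕ) : List A :=
  (List.range (2 * l + 1)).map fun i => x ((i : ℤ) - (l : ℤ))

/-- `ChainWord L u v n w` : `w` is a chain of length `n` from `u` to `v` in the
language `L` : `|w| = n + |u|`, `w` has prefix `u` and suffix `v`, and every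
factor of `w` of length at most `|u|` belongs to `L`. -/
def ChainWord (L : Set (List A)) (u v : List A) (n : ℕ) (w : List A) : Prop :=
  u.length = v.length ∧ w.length = n + u.length ∧
  w.take u.length = u ∧ w.drop n = v ∧
  ∀ z : List A, z <:+: w → z.length ≤ u.length → z ∈ L

/-- An `ε`-chain of length `n > 0` from `x` to `y` inside `Sig`. -/
def EpsChain (Sig : Set (ℤ → A)) (ε : ℝ) (n : ℕ) (x y : ℤ → A) : Prop :=
  0 < n ∧ ∃ z : ℕ → ℤ → A, z 0 = x ∧ z n = y ∧ (∀ i ≤ n, z i ∈ Sig) ∧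
    ∀ i < n, rho (shift (z i)) (z (i + 1)) < ε

/-- The chain relation of `(Sig, σ)`. -/
def ChainRel (Sig : Set (ℤ → A)) (x y : ℤ → A) : Prop :=
  ∀ ε : ℝ, 0 < ε → ∃ n : ℕ, EpsChain Sig ε n x y

/-- Chain-transitivity. -/
def ChainTransitive (Sig : Set (ℤ → A)) : Prop :=
  ∀ x ∈ Sig, ∀ y ∈ Sig, ChainRel Sig x y

/-- Chain-mixing. -/
def ChainMixing (Sig : Set (ℤ → A)) : Prop :=
  ∀ x ∈ Sig, ∀ y ∈ Sig, ∀ ε : ℝ, 0 < ε → ∃ k : ℕ, ∀ n, k < n → EpsChain Sig ε n x y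

/-- Distance from a point to a set, with respect to `rho`. -/
noncomputable def distTo (x : ℤ → A) (Y : Set (ℤ → A)) : ℝ := sInf (rho x '' Y)

/-- `Y` is an attractor of the dynamical system `(Sig, σ)`. -/
def IsAttractor (Sig Y : Set (ℤ → A)) : Prop :=
  Y.Nonempty ∧ Y ⊆ Sig ∧ RhoClosed Y ∧ shift '' Y = Y ∧
  (∀ ε : ℝ, 0 < ε → ∃ δ : ℝ, 0 < δ ∧ ∀ x ∈ Sig, distTo x Y < δ →
    ∀ n : ℕ, 0 < n → distTo (shift^[n] x) Y < ε) ∧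
  (∃ δ : ℝ, 0 < δ ∧ ∀ x ∈ Sig, distTo x Y < δ →
    Filter.Tendsto (fun n : ℕ => distTo (shift^[n] x) Y) Filter.atTop (nhds 0))

end Subshift

/-! Let `T` be the set of vertices visited by presentations of points of the attractor `Y`.
Stability lets one replace the future of a point of `Y` by any admissible future without
leaving `Y`: pushed far into the past, the modified point is arbitrarily close to `Y`, and
stability carries that closeness forward. This gives both that no edge leaves `T` and that
`Y = Σ(T)`. If `u ∈ T` is linked to `v`, a long word common to their restricted follower sets
can be read after `u` in a point of `Y` and along a cycle through `v`. The periodic point of that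
cycle is then close to `Y`; asymptotic stability along its finite orbit forces it into `Y`,
so `v ∈ T`. Hence `T` is a union of `≈`-classes. -/

section Sequences

variable {α : Type}

theorem rho_nonneg (x y : ℤ → α) : 0 ≤ rho x y := by
  unfold rho
  split_ifs <;> positivity

theorem rho_lt_of_eqOn {x y : ℤ → α} {l : ℕ} (h : ∀ i : ℤ, i.natAbs ≤ l → x i = y i) :
    rho x y < (2 : ℝ) ^ (-(l : ℤ)) := by
  unfold rho
  split_ifs with hxy
  · positivity
  · have hne : {n : ℕ | ∃ i : ℤ, i.natAbs = n ∧ x i ≠ y i}.Nonempty := by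
      obtain ⟨i, hi⟩ := Function.ne_iff.mp hxy
      exact ⟨_, i, rfl, hi⟩
    have hl : l < sInf {n : ℕ | ∃ i : ℤ, i.natAbs = n ∧ x i ≠ y i} := by
      obtain ⟨i, hi, hd⟩ := Nat.sInf_mem hne
      by_contra! hle
      exact hd (h i (hi ▸ hle))
    exact zpow_lt_zpow_right₀ one_lt_two (by omega)

theorem exists_rho_lt {ε : ℝ} (hε : 0 < ε) :
    ∃ l : ℕ, ∀ x y : ℤ → α, (∀ i : ℤ, i.natAbs ≤ l → x i = y i) → rho x y < ε := by
  obtain ⟨l, hl⟩ := exists_pow_lt_of_lt_one hε (by norm_num : (2⁻¹ : ℝ) < 1)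
  refine ⟨l, fun x y h => (rho_lt_of_eqOn h).trans_le ?_⟩
  rw [zpow_neg, zpow_natCast, ← inv_pow]
  exact hl.le

theorem distTo_lt_of_rho_lt {Y : Set (ℤ → α)} {x y : ℤ → α} {δ : ℝ} (hy : y ∈ Y)
    (h : rho x y < δ) : distTo x Y < δ :=
  (csInf_le (show BddBelow (rho x '' Y) from ⟨0, by rintro _ ⟨z, -, rfl⟩; exact rho_nonneg x z⟩)
    ⟨y, hy, rfl⟩).trans_lt h

theorem mem_of_forall_distTo_lt {Y : Set (ℤ → α)} {x : ℤ → α} (hY : RhoClosed Y)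
    (hne : Y.Nonempty) (h : ∀ ε : ℝ, 0 < ε → distTo x Y < ε) : x ∈ Y := by
  refine hY x fun ε hε => ?_
  obtain ⟨_, ⟨y, hy, rfl⟩, hlt⟩ := exists_lt_of_csInf_lt (hne.image _) (h ε hε)
  exact ⟨y, hy, hlt⟩

def shiftBy (k : ℤ) (x : ℤ → α) : ℤ → α := fun i => x (i + k)

theorem shiftBy_zero (x : ℤ → α) : shiftBy 0 x = x :=
  funext fun i => congrArg x (add_zero i)

theorem shiftBy_shiftBy (a b : ℤ) (x : ℤ → α) : shiftBy a (shiftBy b x) = shiftBy (a + b) x :=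
  funext fun i => congrArg x (add_assoc i a b)

theorem iterate_shift (n : ℕ) (x : ℤ → α) : shift^[n] x = shiftBy n x := by
  induction n with
  | zero => exact (shiftBy_zero x).symm
  | succ n ih =>
    rw [Function.iterate_succ_apply', ih]
    exact (shiftBy_shiftBy 1 n x).trans (by push_cast; rw [add_comm])

theorem shift_injective : Function.Injective (shift : (ℤ → α) → ℤ → α) := fun x y h =>
  funext fun i => by simpa [shift] using congrFun h (i - 1)

theorem shiftBy_mem {Y : Set (ℤ → α)} (hY : shift '' Y = Y) (k : ℤ) {x : ℤ → α} (hx : x ∈ Y) :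
    shiftBy k x ∈ Y := by
  have hpre : shift ⁻¹' Y = Y := by
    conv_lhs => rw [← hY]
    exact shift_injective.preimage_image Y
  induction k using Int.induction_on with
  | zero => rwa [shiftBy_zero]
  | succ n ih =>
    rw [← hY]
    exact ⟨_, ih, shiftBy_shiftBy 1 n x |>.trans (by rw [add_comm])⟩
  | pred n ih =>
    rw [← hpre, Set.mem_preimage]
    convert ih using 1
    exact (shiftBy_shiftBy 1 _ x).trans (by ring_nf)

theorem isPeriodicPt_shift {x : ℤ → α} {p : ℕ} (hx : Function.Periodic x p) :
    Function.IsPeriodicPt shift p x := by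
  show shift^[p] x = x
  rw [iterate_shift]
  exact funext hx

def splice (E : ℤ → α) (f : ℕ → α) : ℤ → α := fun i => if i < 0 then E i else f i.toNat

theorem splice_of_neg {E : ℤ → α} {f : ℕ → α} {i : ℤ} (hi : i < 0) : splice E f i = E i :=
  if_pos hi

theorem splice_of_nonneg {E : ℤ → α} {f : ℕ → α} {i : ℤ} (hi : 0 ≤ i) :
    splice E f i = f i.toNat :=
  if_neg (not_lt.mpr hi)

theorem splice_natCast (E : ℤ → α) (f : ℕ → α) (n : ℕ) : splice E f n = f n :=
  splice_of_nonneg n.cast_nonneg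

end Sequences

theorem Function.Periodic.eq_of_tendsto {X : Type} [TopologicalSpace X] [T2Space X]
    {d : ℕ → X} {p : ℕ} {L : X} (hd : Function.Periodic d p) (hp : 0 < p)
    (h : Filter.Tendsto d Filter.atTop (nhds L)) (n : ℕ) : d n = L := by
  have hmono : StrictMono fun k : ℕ => n + k * p := fun a b hab =>
    Nat.add_lt_add_left (Nat.mul_lt_mul_of_pos_right hab hp) n
  have hsub := h.comp hmono.tendsto_atTop
  rw [show (d ∘ fun k => n + k * p) = fun _ => d n from funext fun k => hd.nat_mul k n] at hsub
  exact tendsto_nhds_unique tendsto_const_nhds hsub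

theorem Set.Infinite.exists_length_gt {α : Type} [Finite α] {W : Set (List α)}
    (hW : W.Infinite) (n : ℕ) : ∃ w ∈ W, n < w.length := by
  by_contra! h
  exact hW ((List.finite_length_le α n).subset h)

section Attractor

variable {α : Type} {Sig Y : Set (ℤ → α)}

theorem IsAttractor.mem_of_past_eq (hSig : shift '' Sig = Sig) (hY : IsAttractor Sig Y)
    {x y : ℤ → α} (hx : x ∈ Sig) (hy : y ∈ Y) (hxy : ∀ i < 0, x i = y i) : x ∈ Y := by
  obtain ⟨hne, -, hcl, hinv, hstable, -⟩ := hY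
  refine mem_of_forall_distTo_lt hcl hne fun ε hε => ?_
  obtain ⟨δ, hδ, hδε⟩ := hstable ε hε
  obtain ⟨l, hl⟩ := exists_rho_lt (α := α) hδ
  have hnear : distTo (shiftBy (-(l + 1 : ℕ)) x) Y < δ :=
    distTo_lt_of_rho_lt (shiftBy_mem hinv _ hy) (hl _ _ fun i hi => hxy _ (by omega))
  simpa [iterate_shift, shiftBy_shiftBy, shiftBy_zero] using
    hδε _ (shiftBy_mem hSig _ hx) hnear (l + 1) l.succ_pos

theorem IsAttractor.exists_forall_isPeriodicPt_mem (hY : IsAttractor Sig Y) :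
    ∃ δ > 0, ∀ z ∈ Sig, distTo z Y < δ →
      ∀ p, 0 < p → Function.IsPeriodicPt shift p z → z ∈ Y := by
  obtain ⟨hne, -, hcl, -, -, δ, hδ, hattr⟩ := hY
  refine ⟨δ, hδ, fun z hz hzY p hp hper => mem_of_forall_distTo_lt hcl hne fun ε hε => ?_⟩
  have hd : Function.Periodic (fun n => distTo (shift^[n] z) Y) p := fun n => by
    simp only [Function.iterate_add_apply, hper.eq]
  have h0 : distTo z Y = 0 := hd.eq_of_tendsto hp (hattr z hz hzY) 0
  rwa [h0]

end Attractor

namespace LGraph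

variable {A : Type} {G : LGraph A}

theorem Linked.symm {u v : G.V} (h : G.Linked u v) : G.Linked v u := by
  rwa [Linked, Set.inter_comm]

theorem saturatedSet_of_linked {S : Set G.V} (h : ∀ u v, G.Linked u v → u ∈ S → v ∈ S) :
    G.SaturatedSet S := by
  intro u v huv
  induction huv with
  | refl => rfl
  | tail _ hlink ih => exact ih.trans ⟨h _ _ hlink, h _ _ hlink.symm⟩

theorem Reach.exists_walk {u v : G.V} (h : G.Reach u v) : ∃ es, G.Walk u v es := by
  induction h using Relation.ReflTransGen.head_induction_on with
  | refl => exact ⟨[], .nil v⟩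
  | head hstep _ ih =>
    obtain ⟨e, rfl, he⟩ := hstep
    obtain ⟨es, hes⟩ := ih
    exact ⟨e :: es, .cons e (he ▸ hes)⟩

theorem Walk.append {u v w : G.V} {es fs : List G.E} (h₁ : G.Walk u v es)
    (h₂ : G.Walk v w fs) : G.Walk u w (es ++ fs) := by
  induction h₁ with
  | nil => exact h₂
  | cons e _ ih => exact .cons e (ih h₂)

theorem Walk.source_getElem_zero {u v : G.V} {es : List G.E} (h : G.Walk u v es)
    (hes : 0 < es.length) : G.s es[0] = u := by
  cases h with
  | nil => simp at hes
  | cons e _ => rfl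

theorem Walk.source_getElem_succ {u v : G.V} {es : List G.E} (h : G.Walk u v es) (i : ℕ)
    (hi : i + 1 < es.length) : G.s es[i + 1] = G.t es[i] := by
  induction h generalizing i with
  | nil => simp at hi
  | cons e h ih =>
    cases i with
    | zero => exact h.source_getElem_zero _
    | succ i => exact ih i _

theorem Walk.eq_of_nil {u v : G.V} (h : G.Walk u v []) : u = v := by
  cases h
  rfl

theorem Walk.target_getElem_last {u v : G.V} {es : List G.E} (h : G.Walk u v es)
    (hes : 0 < es.length) : G.t es[es.length - 1] = v := by
  induction h with
  | nil => simp at hes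
  | cons e h ih =>
    rename_i tl
    rcases tl with _ | ⟨e', tl⟩
    · exact h.eq_of_nil
    · exact ih (by simp)

def IsInfWalk (G : LGraph A) (f : ℕ → G.E) : Prop := ∀ n, G.s (f (n + 1)) = G.t (f n)

def IsBiInfWalk (G : LGraph A) (E : ℤ → G.E) : Prop := ∀ i, G.s (E (i + 1)) = G.t (E i)

theorem exists_isInfWalk (hG : G.Essential) (v : G.V) : ∃ f, G.IsInfWalk f ∧ G.s (f 0) = v := by
  choose out hout using fun u => (hG u).2
  exact ⟨fun n => Nat.rec (out v) (fun _ e => out (G.t e)) n, fun n => hout _, hout v⟩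

theorem Walk.exists_isInfWalk (hG : G.Essential) {u v : G.V} {es : List G.E}
    (h : G.Walk u v es) :
    ∃ f, G.IsInfWalk f ∧ G.s (f 0) = u ∧ ∀ i (hi : i < es.length), f i = es[i] := by
  induction h with
  | nil v =>
    obtain ⟨f, hf, hf0⟩ := LGraph.exists_isInfWalk hG v
    exact ⟨f, hf, hf0, by simp⟩
  | cons e _ ih =>
    obtain ⟨f, hf, hf0, hfes⟩ := ih
    refine ⟨fun | 0 => e | n + 1 => f n, ?_, rfl, ?_⟩
    · rintro (_ | n)
      exacts [hf0, hf n]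
    · rintro (_ | i) hi
      exacts [rfl, hfes i _]

theorem Walk.isInfWalk_cycle {v : G.V} {cs : List G.E} (h : G.Walk v v cs)
    (hc : 0 < cs.length) :
    G.IsInfWalk fun n => cs[n % cs.length]'(Nat.mod_lt n hc) := by
  intro n
  have hmod : (n + 1) % cs.length = (n % cs.length + 1) % cs.length :=
    (Nat.mod_add_mod _ _ _).symm
  have hlt := Nat.mod_lt n hc
  simp only [hmod]
  by_cases hn : n % cs.length + 1 < cs.length
  · simp only [Nat.mod_eq_of_lt hn]
    exact h.source_getElem_succ _ hn
  · have hlast : n % cs.length = cs.length - 1 := by omega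
    simp only [hlast, Nat.sub_add_cancel hc, Nat.mod_self]
    rw [h.source_getElem_zero hc, h.target_getElem_last hc]

theorem IsInfWalk.exists_periodic_isBiInfWalk {f : ℕ → G.E} {p : ℕ} (hf : G.IsInfWalk f)
    (hper : Function.Periodic f p) (hp : 0 < p) :
    ∃ E, G.IsBiInfWalk E ∧ Function.Periodic E p ∧ ∀ n : ℕ, E n = f n := by
  have : NeZero p := ⟨hp.ne'⟩
  -- reading indices in `ZMod p` makes `i ↦ i + 1` on `ℤ` commute with reduction mod `p`
  refine ⟨fun i => f (i : ZMod p).val, fun i => ?_, fun i => ?_, fun n => ?_⟩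
  · simp only [Int.cast_add, Int.cast_one, ZMod.val_add, ZMod.val_one_eq_one_mod,
      Nat.add_mod_mod, hper.map_mod_nat]
    exact hf _
  · simp
  · simp [ZMod.val_natCast, hper.map_mod_nat]

theorem Walk.exists_periodic_isBiInfWalk {v : G.V} {cs : List G.E} (h : G.Walk v v cs)
    (hc : 0 < cs.length) :
    ∃ E, G.IsBiInfWalk E ∧ Function.Periodic E cs.length ∧
      ∀ (i : ℕ) (hi : i < cs.length), E i = cs[i] := by
  have hper :
      Function.Periodic (fun n => cs[n % cs.length]'(Nat.mod_lt n hc)) cs.length :=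
    fun n => by simp
  obtain ⟨E, hE, hEper, hEf⟩ := (h.isInfWalk_cycle hc).exists_periodic_isBiInfWalk hper hc
  exact ⟨E, hE, hEper, fun i hi => by simp [hEf, Nat.mod_eq_of_lt hi]⟩

theorem mem_sigmaIn_iff {S : Set G.V} {x : ℤ → A} :
    x ∈ G.SigmaIn S ↔ ∃ E, G.IsBiInfWalk E ∧ (∀ i, G.s (E i) ∈ S) ∧ G.lab ∘ E = x := by
  constructor
  · rintro ⟨v, E, h⟩
    refine ⟨E, fun i => ?_, fun i => ?_, funext fun i => (h i).2.2.1⟩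
    · rw [(h (i + 1)).1, (h i).2.1]
    · rw [(h i).1]
      exact (h i).2.2.2
  · rintro ⟨E, hE, hS, rfl⟩
    exact ⟨G.s ∘ E, E, fun i => ⟨rfl, (hE i).symm, rfl, hS i⟩⟩

theorem IsBiInfWalk.shiftBy {E : ℤ → G.E} (hE : G.IsBiInfWalk E) (k : ℤ) :
    G.IsBiInfWalk (shiftBy k E) := fun i => by
  simpa only [_root_.shiftBy, add_right_comm i 1 k] using hE (i + k)

theorem IsBiInfWalk.splice {E : ℤ → G.E} {f : ℕ → G.E} (hE : G.IsBiInfWalk E)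
    (hf : G.IsInfWalk f) (h0 : G.s (f 0) = G.s (E 0)) : G.IsBiInfWalk (splice E f) := by
  intro i
  rcases lt_trichotomy i (-1) with hi | rfl | hi
  · rw [splice_of_neg (by omega), splice_of_neg (by omega), hE]
  · rw [show (-1 : ℤ) + 1 = ((0 : ℕ) : ℤ) by norm_num, splice_natCast,
      splice_of_neg (by norm_num), h0, ← hE (-1)]
    norm_num
  · rw [splice_of_nonneg (by omega), splice_of_nonneg (by omega),
      show (i + 1).toNat = i.toNat + 1 by omega, hf]

theorem shiftBy_mem_sigmaIn {S : Set G.V} {x : ℤ → A} (hx : x ∈ G.SigmaIn S) (k : ℤ) :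
    shiftBy k x ∈ G.SigmaIn S := by
  obtain ⟨E, hE, hS, rfl⟩ := mem_sigmaIn_iff.mp hx
  exact mem_sigmaIn_iff.mpr ⟨_, hE.shiftBy k, fun i => hS _, rfl⟩

theorem shift_image_sigmaIn (S : Set G.V) : shift '' G.SigmaIn S = G.SigmaIn S := by
  refine Set.Subset.antisymm (Set.image_subset_iff.mpr fun x hx => shiftBy_mem_sigmaIn hx 1) ?_
  intro x hx
  exact ⟨shiftBy (-1) x, shiftBy_mem_sigmaIn hx (-1),
    (shiftBy_shiftBy 1 (-1) x).trans (by rw [add_neg_cancel, shiftBy_zero])⟩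

def visitedBy (G : LGraph A) (Y : Set (ℤ → A)) : Set G.V :=
  {v | ∃ E, G.IsBiInfWalk E ∧ G.lab ∘ E ∈ Y ∧ G.s (E 0) = v}

variable {Y : Set (ℤ → A)}

theorem source_mem_visitedBy (hY : shift '' Y = Y) {E : ℤ → G.E} (hE : G.IsBiInfWalk E)
    (hEY : G.lab ∘ E ∈ Y) (k : ℤ) : G.s (E k) ∈ G.visitedBy Y :=
  ⟨shiftBy k E, hE.shiftBy k, shiftBy_mem hY k hEY, by simp [shiftBy]⟩

theorem visitedBy_nonempty (hne : Y.Nonempty) (hYsub : Y ⊆ G.Sigma') :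
    (G.visitedBy Y).Nonempty := by
  obtain ⟨y, hy⟩ := hne
  obtain ⟨E, hE, -, rfl⟩ := mem_sigmaIn_iff.mp (hYsub hy)
  exact ⟨_, E, hE, hy, rfl⟩

theorem subset_sigmaIn_visitedBy (hYsub : Y ⊆ G.Sigma') (hY : shift '' Y = Y) :
    Y ⊆ G.SigmaIn (G.visitedBy Y) := by
  intro y hy
  obtain ⟨E, hE, -, rfl⟩ := mem_sigmaIn_iff.mp (hYsub hy)
  exact mem_sigmaIn_iff.mpr ⟨E, hE, source_mem_visitedBy hY hE hy, rfl⟩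

theorem lab_splice_mem (hY : IsAttractor G.Sigma' Y) {E : ℤ → G.E} {f : ℕ → G.E}
    (hE : G.IsBiInfWalk E) (hEY : G.lab ∘ E ∈ Y) (hf : G.IsInfWalk f)
    (h0 : G.s (f 0) = G.s (E 0)) : G.lab ∘ splice E f ∈ Y :=
  hY.mem_of_past_eq (G.shift_image_sigmaIn _)
    (mem_sigmaIn_iff.mpr ⟨_, hE.splice hf h0, fun _ => trivial, rfl⟩) hEY
    fun i hi => by simp [splice_of_neg hi]

theorem sigmaIn_visitedBy_subset (hY : IsAttractor G.Sigma' Y) :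
    G.SigmaIn (G.visitedBy Y) ⊆ Y := by
  intro x hx
  obtain ⟨F, hF, hFS, rfl⟩ := mem_sigmaIn_iff.mp hx
  refine hY.2.2.1 _ fun ε hε => ?_
  obtain ⟨l, hl⟩ := exists_rho_lt (α := A) hε
  obtain ⟨E, hE, hEY, hE0⟩ := hFS (-l)
  have hf : G.IsInfWalk fun n => F (n - l) := fun n => by
    simpa [sub_add_eq_add_sub] using hF (n - l)
  have hspl := lab_splice_mem hY hE hEY hf (by simpa using hE0.symm)
  refine ⟨_, shiftBy_mem hY.2.2.2.1 l hspl, hl _ _ fun i hi => ?_⟩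
  simp only [Function.comp_apply, shiftBy, splice_of_nonneg (by omega : 0 ≤ i + l)]
  congr
  omega

theorem forwardClosed_visitedBy (hG : G.Essential) (hY : IsAttractor G.Sigma' Y) :
    G.ForwardClosed (G.visitedBy Y) := by
  rintro e ⟨E, hE, hEY, hE0⟩
  obtain ⟨f, hf, hf0, hfe⟩ := (Walk.cons e (.nil (G.t e))).exists_isInfWalk hG
  have h0 : G.s (f 0) = G.s (E 0) := hf0.trans hE0.symm
  have hmem :=
    source_mem_visitedBy hY.2.2.2.1 (hE.splice hf h0) (lab_splice_mem hY hE hEY hf h0) 1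
  rwa [show (1 : ℤ) = (1 : ℕ) from rfl, splice_natCast, hf, hfe 0 (by simp)] at hmem

theorem exists_mem_eqOn_walk (hG : G.Essential) (hY : IsAttractor G.Sigma' Y) {u v : G.V}
    (hu : u ∈ G.visitedBy Y) {es : List G.E} (h : G.Walk u v es) :
    ∃ x ∈ Y, ∀ (i : ℕ) (hi : i < es.length), x i = G.lab es[i] := by
  obtain ⟨E, hE, hEY, rfl⟩ := hu
  obtain ⟨f, hf, hf0, hfes⟩ := h.exists_isInfWalk hG
  exact ⟨_, lab_splice_mem hY hE hEY hf hf0, fun i hi => by simp [splice_natCast, hfes i hi]⟩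

theorem exists_closedWalk_of_mem_followR {v : G.V} {w : List A} (hw : w ∈ G.FollowR v)
    (hne : w ≠ []) : ∃ cs, G.Walk v v cs ∧ w <+: cs.map G.lab := by
  obtain ⟨u, es, hes, rfl, hcomp⟩ := hw
  have hlen : 0 < es.length := by simpa [List.length_pos_iff] using hne
  have hu : G.Reach u v := by
    have hlast := (hcomp es[es.length - 1] (List.getElem_mem (by omega))).2.2
    rwa [hes.target_getElem_last hlen] at hlast
  obtain ⟨rs, hrs⟩ := hu.exists_walk
  exact ⟨es ++ rs, hes.append hrs, by simp⟩

theorem exists_periodic_of_mem_followR {v : G.V} {w : List A} (hw : w ∈ G.FollowR v)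
    (hne : w ≠ []) :
    ∃ P, ∃ p : ℕ, 0 < p ∧ G.IsBiInfWalk P ∧ Function.Periodic P p ∧ G.s (P 0) = v ∧
      ∀ (i : ℕ) (hi : i < w.length), G.lab (P i) = w[i] := by
  obtain ⟨cs, hcs, hw⟩ := exists_closedWalk_of_mem_followR hw hne
  have hlen : w.length ≤ cs.length := by simpa using hw.length_le
  have hc : 0 < cs.length := by have := List.length_pos_iff.mpr hne; omega
  obtain ⟨P, hP, hPper, hPcs⟩ := hcs.exists_periodic_isBiInfWalk hc
  refine ⟨P, cs.length, hc, hP, hPper, ?_, fun i hi => ?_⟩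
  · rw [← hcs.source_getElem_zero hc, ← hPcs 0 hc, Nat.cast_zero]
  · simp [hPcs i (by omega), hw.getElem hi]

theorem mem_visitedBy_of_linked [Finite A] (hG : G.Essential) (hY : IsAttractor G.Sigma' Y)
    {u v : G.V} (huv : G.Linked u v) (hu : u ∈ G.visitedBy Y) : v ∈ G.visitedBy Y := by
  obtain ⟨δ, hδ, hperY⟩ := hY.exists_forall_isPeriodicPt_mem
  obtain ⟨l, hl⟩ := exists_rho_lt (α := A) hδ
  obtain ⟨w, ⟨hwu, hwv⟩, hwl⟩ := huv.exists_length_gt (2 * l)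
  obtain ⟨_, es, hes, rfl, -⟩ := hwu
  obtain ⟨x, hxY, hx⟩ := exists_mem_eqOn_walk hG hY hu hes
  obtain ⟨P, p, hp, hP, hPper, hP0, hPw⟩ :=
    exists_periodic_of_mem_followR hwv (List.ne_nil_of_length_pos (by omega))
  have hzY : G.lab ∘ shiftBy l P ∈ Y := by
    refine hperY _ (mem_sigmaIn_iff.mpr ⟨_, hP.shiftBy l, fun _ => trivial, rfl⟩) ?_ p hp
      (isPeriodicPt_shift ((hPper.add_const l).comp G.lab))
    -- since `2 * l < |w|`, both points read `w` on the window `[-l, l]`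
    refine distTo_lt_of_rho_lt (shiftBy_mem hY.2.2.2.1 l hxY) (hl _ _ fun i hi => ?_)
    have hk : (i + l).toNat < (es.map G.lab).length := by simp at hwl ⊢; omega
    have := hPw _ hk
    rw [List.getElem_map, ← hx _ (by simpa using hk)] at this
    simp only [Function.comp_apply, shiftBy]
    rwa [show i + l = ((i + l).toNat : ℤ) by omega]
  simpa [shiftBy, hP0] using source_mem_visitedBy hY.2.2.2.1 (hP.shiftBy l) hzY (-l)

end LGraph

theorem stmt15 {A : Type} [Finite A] (G : LGraph A) (hG : G.Essential)
    (Y : Set (ℤ → A)) (hY : IsAttractor G.Sigma' Y) :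
    ∃ S : Set G.V, S.Nonempty ∧ G.SaturatedSet S ∧ G.ForwardClosed S ∧
      Y = G.SigmaIn S :=
  ⟨G.visitedBy Y, LGraph.visitedBy_nonempty hY.1 hY.2.1,
    LGraph.saturatedSet_of_linked fun _ _ huv => LGraph.mem_visitedBy_of_linked hG hY huv,
    LGraph.forwardClosed_visitedBy hG hY,
    (LGraph.subset_sigmaIn_visitedBy hY.2.1 hY.2.2.2.1).antisymm
      (LGraph.sigmaIn_visitedBy_subset hY)⟩
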